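/- Suppose the trapping probabilities satisfy p_x ≥ p for all x ≠ o, for some p > 0. Then there exists a constant c = c(p,q) > 0 such that for all n ≥ 1, the annealed survival probability satisfies P_o(T(ω) > n) ≤ e^{-cn}. -/

import Mathlib

/-!
Given the walk, the traps are independent. A walk on a tree that is at `S_n` at time `n` has
visited every ancestor of `S_n`, and each of these `|S_n|` vertices is a trap with probability at
least `p`; so the quenched survival probability is at most `β ^ |S_n|` for `β = max (1 - p) (2/3)`.
From a non-root vertex the walk moves to a child with probability `q / (q + 1)`, so
`E[β ^ |S_{k+1}| | S_k] ≤ ρ β ^ |S_k|` with `ρ = (q β² + 1) / ((q + 1) β)`, and `ρ < 1` because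
`1 / q < β < 1`. Hence `E[β ^ |S_n|] ≤ ρ ^ n`.
-/

open MeasureTheory ProbabilityTheory Finset
open scoped ENNReal NNReal

/-- One step of the simple random walk on the `q`-ary tree (vertices: words over `Fin q`, root =
empty word), driven by a uniform random seed `u`: at the root (degree `q`) move to child `u % q`;
at any other vertex (degree `q+1`) move to child `u % (q+1)` if `u % (q+1) < q`, and to the parent
otherwise. -/
def treeStep (q : ℕ) (v : List (Fin q)) (u : ℕ) : List (Fin q) :=
  match v with
  | [] => if h : u % q < q then [⟨u % q, h⟩] else []
  | a :: t => if h : u % (q + 1) < q then ⟨u % (q + 1), h⟩ :: a :: t else t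

/-- The simple random walk path on the `q`-ary tree started at the root. -/
def treeWalk (q : ℕ) (u : ℕ → ℕ) : ℕ → List (Fin q)
  | 0 => []
  | n + 1 => treeStep q (treeWalk q u n) (u n)

/-- The survival time `T(ω) = inf {k ≥ 0 : ω(S_k) = 1}` of the walk among the traps `τ`,
as an element of `[0,∞]` (it equals `∞` if no trap is ever visited). -/
noncomputable def treeHit (q : ℕ) (τ : List (Fin q) → Bool) (u : ℕ → ℕ) : ℝ≥0∞ :=
  sInf {t : ℝ≥0∞ | ∃ k : ℕ, t = (k : ℝ≥0∞) ∧ τ (treeWalk q u k) = true}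

namespace ProbabilityTheory

variable {Ω α ι : Type*} {mΩ : MeasurableSpace Ω} {μ : Measure Ω}

theorem iIndepFun.measure_biInter_preimage_le_pow_card {β : Type*} [MeasurableSpace β]
    {f : ι → Ω → β} (hf : iIndepFun f μ) {s : Set β} (hs : MeasurableSet s)
    [IsProbabilityMeasure μ] {A B : Finset ι} (hBA : B ⊆ A) {r : ℝ≥0∞}
    (hr : ∀ i ∈ B, μ (f i ⁻¹' s) ≤ r) :
    μ (⋂ i ∈ A, f i ⁻¹' s) ≤ r ^ #B := by
  classical
  rw [hf.meas_biInter fun i _ => ⟨s, hs, rfl⟩, ← prod_sdiff hBA]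
  calc (∏ i ∈ A \ B, μ (f i ⁻¹' s)) * ∏ i ∈ B, μ (f i ⁻¹' s)
      ≤ 1 * ∏ _i ∈ B, r := by
        gcongr
        · exact prod_le_one' fun _ _ => prob_le_one
        · exact hr _ ‹_›
    _ = r ^ #B := by rw [one_mul, prod_const]

variable [MeasurableSpace α] [MeasurableSpace ι] {U : ℕ → Ω → ι} {X : ℕ → Ω → α}
  {F : α → ι → α} {x₀ : α}

theorem measurable_iSup_comap_of_recursion (hF : Measurable (Function.uncurry F))
    (hX₀ : ∀ ω, X 0 ω = x₀) (hX : ∀ n ω, X (n + 1) ω = F (X n ω) (U n ω)) (n : ℕ) :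
    Measurable[⨆ k ∈ Set.Iio n, MeasurableSpace.comap (U k) inferInstance] (X n) := by
  induction n with
  | zero => simp only [funext hX₀]; exact measurable_const
  | succ n ih =>
    have hmono : (⨆ k ∈ Set.Iio n, MeasurableSpace.comap (U k) inferInstance)
        ≤ ⨆ k ∈ Set.Iio (n + 1), MeasurableSpace.comap (U k) inferInstance :=
      biSup_mono fun k hk => lt_trans hk (Nat.lt_succ_self n)
    have hU : Measurable[⨆ k ∈ Set.Iio (n + 1), MeasurableSpace.comap (U k) inferInstance]
        (U n) :=
      (comap_measurable (U n)).mono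
        (le_biSup (fun k => MeasurableSpace.comap (U k) inferInstance) n.lt_add_one) le_rfl
    rw [funext (hX n)]
    exact hF.comp ((ih.mono hmono le_rfl).prodMk hU)

theorem measurable_of_recursion (hU : ∀ n, Measurable (U n)) (hF : Measurable (Function.uncurry F))
    (hX₀ : ∀ ω, X 0 ω = x₀) (hX : ∀ n ω, X (n + 1) ω = F (X n ω) (U n ω)) (n : ℕ) :
    Measurable (X n) :=
  (measurable_iSup_comap_of_recursion hF hX₀ hX n).mono (iSup₂_le fun k _ => (hU k).comap_le) le_rfl

theorem iIndepFun.indepFun_of_recursion (hUi : iIndepFun U μ) (hU : ∀ n, Measurable (U n))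
    (hF : Measurable (Function.uncurry F))
    (hX₀ : ∀ ω, X 0 ω = x₀) (hX : ∀ n ω, X (n + 1) ω = F (X n ω) (U n ω)) (n : ℕ) :
    IndepFun (X n) (U n) μ := by
  have hindep := indep_iSup_of_disjoint (fun k => (hU k).comap_le) hUi
    (S := Set.Iio n) (T := {n}) (by simp)
  refine indep_of_indep_of_le_right (indep_of_indep_of_le_left hindep ?_) ?_
  · exact (measurable_iSup_comap_of_recursion hF hX₀ hX n).comap_le
  · exact le_biSup (fun k => MeasurableSpace.comap (U k) inferInstance) (Set.mem_singleton n)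

theorem IndepFun.lintegral_comp_eq_sum [Fintype ι] [MeasurableSingletonClass ι]
    {Y : Ω → α} {V : Ω → ι} (hYV : IndepFun Y V μ) (hY : Measurable Y) (hV : Measurable V)
    {h : α → ι → ℝ≥0∞} (hh : ∀ i, Measurable (h · i)) :
    ∫⁻ ω, h (Y ω) (V ω) ∂μ = ∑ i, μ (V ⁻¹' {i}) * ∫⁻ ω, h (Y ω) i ∂μ := by
  have hsplit : ∀ ω, h (Y ω) (V ω) = ∑ i, h (Y ω) i * ({i} : Set ι).indicator 1 (V ω) := by
    intro ω
    classical
    simp only [Set.indicator_apply, Set.mem_singleton_iff, Pi.one_apply, mul_ite, mul_one,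
      mul_zero, sum_ite_eq, mem_univ, if_true]
  have hind : ∀ i, Measurable (({i} : Set ι).indicator (1 : ι → ℝ≥0∞)) :=
    fun i => measurable_one.indicator (measurableSet_singleton i)
  simp_rw [hsplit]
  rw [lintegral_finsetSum (f := fun i ω => h (Y ω) i * ({i} : Set ι).indicator 1 (V ω)) _
    fun i _ => ((hh i).comp hY).mul ((hind i).comp hV)]
  refine sum_congr rfl fun i _ => ?_
  rw [mul_comm, ← lintegral_indicator_one (hV (measurableSet_singleton i))]
  exact lintegral_mul_eq_lintegral_mul_lintegral_of_indepFun ((hh i).comp hY) ((hind i).comp hV)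
    (hYV.comp (hh i) (hind i))

theorem lintegral_comp_le_pow_of_recursion [Fintype ι] [MeasurableSingletonClass ι]
    [IsProbabilityMeasure μ] (hUi : iIndepFun U μ) (hU : ∀ n, Measurable (U n))
    (hF : Measurable (Function.uncurry F))
    (hX₀ : ∀ ω, X 0 ω = x₀) (hX : ∀ n ω, X (n + 1) ω = F (X n ω) (U n ω))
    {g : α → ℝ≥0∞} (hg : Measurable g) {ρ : ℝ≥0∞}
    (hdrift : ∀ n x, ∑ i, μ (U n ⁻¹' {i}) * g (F x i) ≤ ρ * g x) (n : ℕ) :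
    ∫⁻ ω, g (X n ω) ∂μ ≤ ρ ^ n * g x₀ := by
  induction n with
  | zero => simp [hX₀]
  | succ n ih =>
    have hXn : Measurable (X n) := measurable_of_recursion hU hF hX₀ hX n
    have hgF : ∀ i, Measurable (g ∘ (F · i)) :=
      fun i => hg.comp (hF.comp (measurable_id.prodMk measurable_const))
    calc ∫⁻ ω, g (X (n + 1) ω) ∂μ
        = ∑ i, μ (U n ⁻¹' {i}) * ∫⁻ ω, g (F (X n ω) i) ∂μ := by
          simp_rw [hX]
          exact (hUi.indepFun_of_recursion hU hF hX₀ hX n).lintegral_comp_eq_sum hXn (hU n)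
            (h := fun x i => g (F x i)) hgF
      _ = ∫⁻ ω, ∑ i, μ (U n ⁻¹' {i}) * g (F (X n ω) i) ∂μ := by
          rw [lintegral_finsetSum (f := fun i ω => μ (U n ⁻¹' {i}) * g (F (X n ω) i)) _
            fun i _ => ((hgF i).comp hXn).const_mul _]
          exact sum_congr rfl fun i _ => (lintegral_const_mul _ ((hgF i).comp hXn)).symm
      _ ≤ ∫⁻ ω, ρ * g (X n ω) ∂μ := lintegral_mono fun ω => hdrift n (X n ω)
      _ = ρ * ∫⁻ ω, g (X n ω) ∂μ := lintegral_const_mul _ (hg.comp hXn)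
      _ ≤ ρ * (ρ ^ n * g x₀) := by gcongr
      _ = ρ ^ (n + 1) * g x₀ := by ring

theorem measure_eq_false_le_one_sub [IsProbabilityMeasure μ] {f : Ω → Bool} (hf : Measurable f)
    {a : ℝ≥0∞} (ha : a ≤ μ {ω | f ω = true}) :
    μ {ω | f ω = false} ≤ 1 - a := by
  have hcompl : {ω | f ω = false} = {ω | f ω = true}ᶜ := by ext ω; simp
  have hmeas : MeasurableSet {ω | f ω = true} := hf (measurableSet_singleton true)
  rw [hcompl, prob_compl_eq_one_sub hmeas]
  exact tsub_le_tsub_left ha 1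

end ProbabilityTheory

theorem treeStep_eq_tail_or_cons (q : ℕ) (v : List (Fin q)) (u : ℕ) :
    treeStep q v u = v.tail ∨ ∃ c, treeStep q v u = c :: v := by
  unfold treeStep
  split <;> split_ifs <;> simp

theorem exists_treeWalk_eq_drop (q : ℕ) (u : ℕ → ℕ) (n j : ℕ) :
    ∃ i ≤ n, treeWalk q u i = (treeWalk q u n).drop j := by
  induction n generalizing j with
  | zero => exact ⟨0, le_rfl, by simp [treeWalk]⟩
  | succ n ih =>
    rcases treeStep_eq_tail_or_cons q (treeWalk q u n) (u n) with h | ⟨c, h⟩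
    · obtain ⟨i, hi, hw⟩ := ih (j + 1)
      refine ⟨i, hi.trans n.le_succ, ?_⟩
      rw [treeWalk, h, hw, List.drop_tail]
    · cases j with
      | zero => exact ⟨n + 1, le_rfl, rfl⟩
      | succ j =>
        obtain ⟨i, hi, hw⟩ := ih j
        exact ⟨i, hi.trans n.le_succ, by rw [treeWalk, h, hw, List.drop_succ_cons]⟩

theorem lt_treeHit_iff {q : ℕ} {τ : List (Fin q) → Bool} {u : ℕ → ℕ} {n : ℕ} :
    (n : ℝ≥0∞) < treeHit q τ u ↔ ∀ k ≤ n, τ (treeWalk q u k) = false := by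
  constructor
  · intro h k hk
    by_contra hτ
    have : treeHit q τ u ≤ k := sInf_le ⟨k, rfl, by simpa using hτ⟩
    exact (h.trans_le this).not_ge (Nat.cast_le.2 hk)
  · intro h
    refine (ENNReal.lt_add_right (ENNReal.natCast_ne_top n) one_ne_zero).trans_le
      (le_sInf ?_)
    rintro _ ⟨k, rfl, hk⟩
    have : n < k := by
      by_contra! hkn
      simp [h k hkn] at hk
    exact_mod_cast this

theorem sum_pow_length_treeStep_nil {R : Type*} [CommSemiring R] {q : ℕ} (hq : 0 < q) (β : R) :
    ∑ i : Fin (q * (q + 1)), β ^ (treeStep q [] i).length = (q * (q + 1) : ℕ) * β := by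
  simp [treeStep, Nat.mod_lt _ hq]

theorem sum_pow_length_treeStep_cons {R : Type*} [CommSemiring R] {q : ℕ} (a : Fin q)
    (t : List (Fin q)) (β : R) :
    ∑ i : Fin (q * (q + 1)), β ^ (treeStep q (a :: t) i).length
      = q * (q * β ^ 2 + 1) * β ^ t.length := by
  have hmod : ∀ x : Fin q × Fin (q + 1), ((finProdFinEquiv x : ℕ) % (q + 1)) = x.2 := by
    rintro ⟨x₁, x₂⟩
    simp [finProdFinEquiv, Nat.mod_eq_of_lt x₂.2]
  rw [← finProdFinEquiv.sum_comp, Fintype.sum_prod_type]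
  simp only [treeStep, hmod]
  simp [Fin.sum_univ_castSucc, pow_add]
  ring

theorem sum_pow_length_treeStep_le {q : ℕ} (hq : 0 < q) {β ρ : ℝ≥0∞} (hβρ : β ≤ ρ)
    (hdrift : q * β ^ 2 + 1 ≤ (q + 1) * ρ * β) (v : List (Fin q)) :
    ∑ i : Fin (q * (q + 1)), β ^ (treeStep q v i).length
      ≤ (q * (q + 1) : ℕ) * ρ * β ^ v.length := by
  cases v with
  | nil =>
    rw [sum_pow_length_treeStep_nil hq, List.length_nil, pow_zero, mul_one]
    gcongr
  | cons a t =>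
    rw [sum_pow_length_treeStep_cons, List.length_cons, pow_succ β t.length]
    calc (q : ℝ≥0∞) * (q * β ^ 2 + 1) * β ^ t.length
        ≤ q * ((q + 1) * ρ * β) * β ^ t.length := by gcongr
      _ = (q * (q + 1) : ℕ) * ρ * (β ^ t.length * β) := by push_cast; ring

instance (q : ℕ) : MeasurableSpace (List (Fin q)) := ⊤

instance (q : ℕ) : DiscreteMeasurableSpace (List (Fin q)) := ⟨fun _ => trivial⟩

section Survival

variable {Ω : Type*} {mΩ : MeasurableSpace Ω} {μ : Measure Ω} [IsProbabilityMeasure μ]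

theorem measure_forall_treeWalk_eq_false_le {q : ℕ} {τ : List (Fin q) → Ω → Bool}
    (hτ : iIndepFun τ μ) {β : ℝ≥0∞} (hβ : ∀ x ≠ [], μ {ω | τ x ω = false} ≤ β)
    (u : ℕ → ℕ) (n : ℕ) :
    μ {ω | ∀ k ≤ n, τ (treeWalk q u k) ω = false} ≤ β ^ (treeWalk q u n).length := by
  classical
  set v := treeWalk q u n
  have hset : {ω | ∀ k ≤ n, τ (treeWalk q u k) ω = false}
      = ⋂ x ∈ (range (n + 1)).image (treeWalk q u), τ x ⁻¹' {false} := by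
    ext ω
    simp
  have hcard : #((range v.length).image v.drop) = v.length := by
    rw [card_image_of_injOn, card_range]
    intro j₁ h₁ j₂ h₂ hdrop
    have := congrArg List.length hdrop
    simp only [List.length_drop] at this
    simp only [coe_range, Set.mem_Iio] at h₁ h₂
    omega
  rw [hset, ← hcard]
  refine hτ.measure_biInter_preimage_le_pow_card (measurableSet_singleton false) ?_ ?_
  · intro x hx
    obtain ⟨j, -, rfl⟩ := mem_image.1 hx
    obtain ⟨i, hi, hw⟩ := exists_treeWalk_eq_drop q u n j
    exact mem_image.2 ⟨i, mem_range.2 (Nat.lt_succ_of_le hi), hw⟩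
  · intro x hx
    obtain ⟨j, hj, rfl⟩ := mem_image.1 hx
    refine hβ _ fun hnil => ?_
    have := congrArg List.length hnil
    simp only [List.length_drop, List.length_nil] at this
    have := mem_range.1 hj
    omega

theorem lintegral_pow_length_treeWalk_le {q : ℕ} (hq : 0 < q) {U : ℕ → Ω → Fin (q * (q + 1))}
    (hUi : iIndepFun U μ) (hU : ∀ n, Measurable (U n))
    (hUunif : ∀ n i, μ {ω | U n ω = i} = ((q * (q + 1) : ℕ) : ℝ≥0∞)⁻¹)
    {β ρ : ℝ≥0∞} (hβρ : β ≤ ρ) (hdrift : q * β ^ 2 + 1 ≤ (q + 1) * ρ * β) (n : ℕ) :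
    ∫⁻ ω, β ^ (treeWalk q (fun k => (U k ω : ℕ)) n).length ∂μ ≤ ρ ^ n := by
  have hm : ((q * (q + 1) : ℕ) : ℝ≥0∞) ≠ 0 := by simp [hq.ne']
  have hstep : ∀ n (v : List (Fin q)),
      ∑ i, μ (U n ⁻¹' {i}) * β ^ (treeStep q v i).length ≤ ρ * β ^ v.length := by
    intro n v
    simp_rw [Set.preimage, Set.mem_singleton_iff, hUunif, ← mul_sum]
    calc ((q * (q + 1) : ℕ) : ℝ≥0∞)⁻¹ * ∑ i : Fin (q * (q + 1)), β ^ (treeStep q v i).length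
        ≤ ((q * (q + 1) : ℕ) : ℝ≥0∞)⁻¹ * ((q * (q + 1) : ℕ) * ρ * β ^ v.length) := by
          gcongr; exact sum_pow_length_treeStep_le hq hβρ hdrift v
      _ = ρ * β ^ v.length := by
          rw [mul_assoc, ENNReal.inv_mul_cancel_left hm (ENNReal.natCast_ne_top _)]
  simpa [treeWalk] using lintegral_comp_le_pow_of_recursion hUi hU
    (F := fun v (i : Fin (q * (q + 1))) => treeStep q v i)
    (X := fun n ω => treeWalk q (fun k => (U k ω : ℕ)) n) Measurable.of_discrete
    (fun _ => rfl) (fun _ _ => rfl) Measurable.of_discrete hstep n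

end Survival

theorem prod_lt_treeHit_eq_lintegral {Ω₁ Ω₂ : Type*} [MeasurableSpace Ω₁] [MeasurableSpace Ω₂]
    (P₁ : Measure Ω₁) (P₂ : Measure Ω₂) [SFinite P₂] {q m : ℕ} {U : ℕ → Ω₁ → Fin m}
    (hU : ∀ n, Measurable (U n)) {τ : List (Fin q) → Ω₂ → Bool} (hτ : ∀ x, Measurable (τ x))
    (n : ℕ) :
    (P₁.prod P₂) {ω | (n : ℝ≥0∞) < treeHit q (fun x => τ x ω.2) (fun k => (U k ω.1 : ℕ))}
      = ∫⁻ ω₁, P₂ {ω₂ | ∀ k ≤ n, τ (treeWalk q (fun j => (U j ω₁ : ℕ)) k) ω₂ = false} ∂P₁ := by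
  simp_rw [lt_treeHit_iff]
  refine Measure.prod_apply ?_
  have hW : ∀ k, Measurable fun ω₁ => treeWalk q (fun j => (U j ω₁ : ℕ)) k :=
    measurable_of_recursion hU (F := fun v (i : Fin m) => treeStep q v i) Measurable.of_discrete
      (fun _ => rfl) (fun _ _ => rfl)
  have hτW : ∀ k, Measurable fun ω : Ω₁ × Ω₂ => τ (treeWalk q (fun j => (U j ω.1 : ℕ)) k) ω.2 :=
    fun k => (measurable_from_prod_countable_right (f := fun x : List (Fin q) × Ω₂ => τ x.1 x.2)
      hτ).comp (((hW k).comp measurable_fst).prodMk measurable_snd)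
  simp only [Set.ofPred_forall]
  exact .iInter fun k => .iInter fun _ => hτW k (measurableSet_singleton false)

theorem exists_drift_constants {q : ℕ} (hq : 2 ≤ q) {p : ℝ} (hp : 0 < p) :
    ∃ β ρ : ℝ≥0, 1 - p ≤ β ∧ β ≤ ρ ∧ 0 < ρ ∧ ρ < 1 ∧ q * β ^ 2 + 1 ≤ (q + 1) * ρ * β := by
  have hq' : (2 : ℝ) ≤ q := by exact_mod_cast hq
  set b : ℝ := max (1 - p) (2 / 3)
  have hb : 2 / 3 ≤ b := le_max_right _ _
  have hb1 : b < 1 := max_lt (by linarith) (by norm_num)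
  have hb0 : 0 < b := by linarith
  set r : ℝ := (q * b ^ 2 + 1) / ((q + 1) * b)
  have hden : 0 < (q + 1) * b := by positivity
  have hr0 : 0 < r := by positivity
  have hr1 : r < 1 := by
    have : 0 < (q * b - 1) * (1 - b) := mul_pos (by nlinarith) (by linarith)
    rw [div_lt_one hden]
    nlinarith
  have hbr : b ≤ r := by
    rw [le_div_iff₀ hden]
    nlinarith
  have hdrift : q * b ^ 2 + 1 = (q + 1) * r * b := by
    simp only [r]
    field_simp
  refine ⟨⟨b, hb0.le⟩, ⟨r, hr0.le⟩, le_max_left _ _, hbr, hr0, hr1, ?_⟩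
  rw [← NNReal.coe_le_coe]
  push_cast
  exact hdrift.le

theorem annealed_survival_exponential_bound_general (q : ℕ) (hq : 2 ≤ q)
    (p : ℝ) (hp : 0 < p) :
    ∃ c : ℝ, 0 < c ∧
      ∀ (px : List (Fin q) → ℝ), (∀ x, x ≠ ([] : List (Fin q)) → p ≤ px x) → (∀ x, px x ≤ 1) →
      ∀ (Ω₁ : Type) (_ : MeasurableSpace Ω₁) (P₁ : Measure Ω₁), IsProbabilityMeasure P₁ →
      ∀ (U : ℕ → Ω₁ → Fin (q * (q + 1))),
        (∀ n, Measurable (U n)) →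
        iIndepFun U P₁ →
        (∀ n i, P₁ {ω | U n ω = i} = ((q * (q + 1) : ℕ) : ℝ≥0∞)⁻¹) →
      ∀ (Ω₂ : Type) (_ : MeasurableSpace Ω₂) (P₂ : Measure Ω₂), IsProbabilityMeasure P₂ →
      ∀ (τ : List (Fin q) → Ω₂ → Bool),
        (∀ x, Measurable (τ x)) →
        iIndepFun τ P₂ →
        (∀ ω, τ [] ω = false) →
        (∀ x, x ≠ ([] : List (Fin q)) → P₂ {ω | τ x ω = true} = ENNReal.ofReal (px x)) →
      ∀ n : ℕ, 1 ≤ n →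
        (P₁.prod P₂) {ω | (n : ℝ≥0∞) <
            treeHit q (fun x => τ x ω.2) (fun k => (U k ω.1 : ℕ))} ≤
          ENNReal.ofReal (Real.exp (-c * n)) := by
  obtain ⟨β, ρ, hpβ, hβρ, hρ0, hρ1, hdrift⟩ := exists_drift_constants hq hp
  refine ⟨-Real.log ρ, neg_pos.2 (Real.log_neg (by exact_mod_cast hρ0) (by exact_mod_cast hρ1)), ?_⟩
  intro px hpx _ Ω₁ _ P₁ _ U hU hUi hUunif Ω₂ _ P₂ _ τ hτ hτi _ hτp n _
  have htrap : ∀ x ≠ [], P₂ {ω | τ x ω = false} ≤ β := fun x hx =>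
    calc P₂ {ω | τ x ω = false} ≤ 1 - ENNReal.ofReal p :=
          measure_eq_false_le_one_sub (hτ x) ((hτp x hx).symm ▸ ENNReal.ofReal_le_ofReal (hpx x hx))
      _ = ENNReal.ofReal (1 - p) := by rw [ENNReal.ofReal_sub _ hp.le, ENNReal.ofReal_one]
      _ ≤ β := by simpa using ENNReal.ofReal_le_ofReal hpβ
  calc (P₁.prod P₂) {ω | (n : ℝ≥0∞) < treeHit q (fun x => τ x ω.2) (fun k => (U k ω.1 : ℕ))}
      = ∫⁻ ω₁, P₂ {ω₂ | ∀ k ≤ n, τ (treeWalk q (fun j => (U j ω₁ : ℕ)) k) ω₂ = false} ∂P₁ :=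
        prod_lt_treeHit_eq_lintegral P₁ P₂ hU hτ n
    _ ≤ ∫⁻ ω₁, (β : ℝ≥0∞) ^ (treeWalk q (fun j => (U j ω₁ : ℕ)) n).length ∂P₁ :=
        lintegral_mono fun ω₁ => measure_forall_treeWalk_eq_false_le hτi htrap _ n
    _ ≤ (ρ : ℝ≥0∞) ^ n :=
        lintegral_pow_length_treeWalk_le (by omega) hUi hU hUunif (by exact_mod_cast hβρ)
          (by exact_mod_cast hdrift) n
    _ = ENNReal.ofReal (Real.exp (-(-Real.log ρ) * n)) := by
        rw [neg_neg, mul_comm, Real.exp_nat_mul, Real.exp_log (by exact_mod_cast hρ0),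
          ← NNReal.coe_pow, ENNReal.ofReal_coe_nnreal, ENNReal.coe_pow]

/-- If the trapping probabilities satisfy `p_x ≥ p` for all `x ≠ o`, for some
`p > 0`, then there exists a constant `c = c(p,q) > 0` such that for all `n ≥ 1` the annealed
survival probability satisfies `P_o(T(ω) > n) ≤ e^{-cn}`.  The annealed law is the product of the
law `P₁` of the driving seeds of the walk (i.i.d. uniform) with the law `P₂` of the trap
configuration (independent over vertices, no trap at the root, trap at `x ≠ o` with
probability `px x ≥ p`). -/
theorem annealed_survival_exponential_bound (q : ℕ) (hq : 2 ≤ q)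
    (p : ℝ) (hp : 0 < p) (hp1 : p < 1) :
    ∃ c : ℝ, 0 < c ∧
      ∀ (px : List (Fin q) → ℝ), (∀ x, x ≠ ([] : List (Fin q)) → p ≤ px x) → (∀ x, px x ≤ 1) →
      ∀ (Ω₁ : Type) (_ : MeasurableSpace Ω₁) (P₁ : Measure Ω₁), IsProbabilityMeasure P₁ →
      ∀ (U : ℕ → Ω₁ → Fin (q * (q + 1))),
        (∀ n, Measurable (U n)) →
        iIndepFun U P₁ →
        (∀ n i, P₁ {ω | U n ω = i} = ((q * (q + 1) : ℕ) : ℝ≥0∞)⁻¹) →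
      ∀ (Ω₂ : Type) (_ : MeasurableSpace Ω₂) (P₂ : Measure Ω₂), IsProbabilityMeasure P₂ →
      ∀ (τ : List (Fin q) → Ω₂ → Bool),
        (∀ x, Measurable (τ x)) →
        iIndepFun τ P₂ →
        (∀ ω, τ [] ω = false) →
        (∀ x, x ≠ ([] : List (Fin q)) → P₂ {ω | τ x ω = true} = ENNReal.ofReal (px x)) →
      ∀ n : ℕ, 1 ≤ n →
        (P₁.prod P₂) {ω | (n : ℝ≥0∞) <
            treeHit q (fun x => τ x ω.2) (fun k => (U k ω.1 : ℕ))} ≤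
          ENNReal.ofReal (Real.exp (-c * n)) :=
  annealed_survival_exponential_bound_general q hq p hp
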